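/- arXiv:2408.12576 — 2 statements merged into one kernel-verified Lean document; each statement's English description precedes it below -/
import Mathlib

section
/- Let Λ₁ = ⟨1, τ₁⟩ and Λ₂ = ⟨1, τ₂⟩ be lattices in ℂ such that Λ₁ has complex multiplication and Λ₂ is isogenous to Λ₁. Then τ₂ ∈ ℚ(τ₁), and there exists a nonzero integer a such that Λ₁ ⊆ Λ₁·Λ₂ ⊆ (1/a)Λ₁; consequently the lattice product Λ₁·Λ₂ is again a lattice in ℂ. -/
noncomputable section

/-- The multiplier ring `End(Λ) = {α ∈ ℂ : αΛ ⊆ Λ}` of an additive subgroup of ℂ. -/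
def multiplierRing (Λ : AddSubgroup ℂ) : Subring ℂ where
  carrier := {α : ℂ | ∀ x ∈ Λ, α * x ∈ Λ}
  one_mem' := fun x hx => by simpa using hx
  mul_mem' := fun {a b} ha hb x hx => by simpa [mul_assoc] using ha _ (hb x hx)
  add_mem' := fun {a b} ha hb x hx => by
    have := Λ.add_mem (ha x hx) (hb x hx); simpa [add_mul] using this
  zero_mem' := fun x hx => by simpa using Λ.zero_mem
  neg_mem' := fun {a} ha x hx => by simpa [neg_mul] using Λ.neg_mem (ha x hx)

/-- A lattice in ℂ: a rank-2 free ℤ-submodule spanning ℂ over ℝ. -/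
def IsLattice (Λ : AddSubgroup ℂ) : Prop :=
  ∃ v w : ℂ, LinearIndependent ℝ ![v, w] ∧ Λ = AddSubgroup.closure {v, w}

/-- The lattice product of additive subgroups of ℂ. -/
def latticeProduct (A B : AddSubgroup ℂ) : AddSubgroup ℂ :=
  AddSubgroup.closure {z : ℂ | ∃ a ∈ A, ∃ b ∈ B, z = a * b}


private lemma mem_closure_pair {x y z : ℂ} :
    z ∈ AddSubgroup.closure ({x, y} : Set ℂ) ↔ ∃ m n : ℤ, (m : ℂ) * x + (n : ℂ) * y = z := by
  rw [← Submodule.span_int_eq_addSubgroupClosure]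
  show z ∈ Submodule.span ℤ ({x,y} : Set ℂ) ↔ _
  rw [Submodule.mem_span_pair]
  simp [zsmul_eq_mul]

private lemma int_mul_rat (q : ℚ) (a : ℤ) (h : (q.den : ℤ) ∣ a) :
    ∃ m : ℤ, (m : ℚ) = (a : ℚ) * q := by
  obtain ⟨t, rfl⟩ := h
  refine ⟨q.num * t, ?_⟩
  push_cast
  rw [mul_comm (q.den : ℚ) t, mul_assoc, Rat.den_mul_eq_num]
  ring

private lemma range_fin_two {X : Type*} (f : Fin 2 → X) : Set.range f = {f 0, f 1} := by
  ext x; simp [Fin.exists_fin_two, eq_comm]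

/-- Let `Λ₁ = ⟨1, τ₁⟩` and `Λ₂ = ⟨1, τ₂⟩` be lattices in ℂ such that `Λ₁` has
complex multiplication and `Λ₂` is isogenous to `Λ₁` (i.e. `αΛ₂ ⊆ Λ₁` for some `α ≠ 0`).
Then `τ₂ ∈ ℚ(τ₁)`, and there is a nonzero integer `a` with
`Λ₁ ⊆ Λ₁·Λ₂ ⊆ (1/a)·Λ₁`; consequently the lattice product `Λ₁·Λ₂` is again a lattice. -/
theorem statement9 (τ₁ τ₂ : ℂ)
    (h₁ : LinearIndependent ℝ ![(1 : ℂ), τ₁]) (h₂ : LinearIndependent ℝ ![(1 : ℂ), τ₂])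
    (hCM : ∃ α ∈ multiplierRing (AddSubgroup.closure {1, τ₁}), ∀ n : ℤ, α ≠ (n : ℂ))
    (hisog : ∃ α : ℂ, α ≠ 0 ∧
      ∀ x ∈ AddSubgroup.closure ({1, τ₂} : Set ℂ), α * x ∈ AddSubgroup.closure ({1, τ₁} : Set ℂ)) :
    τ₂ ∈ IntermediateField.adjoin ℚ ({τ₁} : Set ℂ) ∧
    (∃ a : ℤ, a ≠ 0 ∧
      AddSubgroup.closure ({1, τ₁} : Set ℂ) ≤
        latticeProduct (AddSubgroup.closure {1, τ₁}) (AddSubgroup.closure {1, τ₂}) ∧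
      ∀ z ∈ latticeProduct (AddSubgroup.closure ({1, τ₁} : Set ℂ))
          (AddSubgroup.closure ({1, τ₂} : Set ℂ)),
        (a : ℂ) * z ∈ AddSubgroup.closure ({1, τ₁} : Set ℂ)) ∧
    IsLattice (latticeProduct (AddSubgroup.closure {1, τ₁}) (AddSubgroup.closure {1, τ₂})) := by

  -- rational independence of 1, τ₁
  have hind : ∀ x y : ℚ, (x : ℂ) + (y : ℂ) * τ₁ = 0 → x = 0 ∧ y = 0 := by
    intro x y hxy
    have := (LinearIndependent.pair_iff.mp h₁) (x : ℝ) (y : ℝ) ?_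
    · exact ⟨by exact_mod_cast this.1, by exact_mod_cast this.2⟩
    · rw [Complex.real_smul, Complex.real_smul]
      push_cast
      push_cast at hxy
      linear_combination hxy
  -- CM gives τ₁² = u + v τ₁ with u v rational
  obtain ⟨α, hα, hαZ⟩ := hCM
  have h1mem : (1 : ℂ) ∈ AddSubgroup.closure ({1, τ₁} : Set ℂ) :=
    AddSubgroup.subset_closure (by simp)
  have hτmem : τ₁ ∈ AddSubgroup.closure ({1, τ₁} : Set ℂ) :=
    AddSubgroup.subset_closure (by simp)
  obtain ⟨m, n, hmn⟩ := mem_closure_pair.mp (by simpa using hα 1 h1mem)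
  obtain ⟨p, q, hpq⟩ := mem_closure_pair.mp (hα τ₁ hτmem)
  have hn : n ≠ 0 := by
    rintro rfl
    exact hαZ m (by simpa using hmn.symm)
  have hnC : (n : ℂ) ≠ 0 := Int.cast_ne_zero.mpr hn
  set u : ℚ := (p : ℚ) / n with hu
  set v : ℚ := ((q - m : ℤ) : ℚ) / n with hv
  have hτsq : τ₁ ^ 2 = (u : ℂ) + (v : ℂ) * τ₁ := by
    have h2 : (n : ℂ) * τ₁ ^ 2 = (p : ℂ) + ((q : ℂ) - (m : ℂ)) * τ₁ := by
      linear_combination τ₁ * hmn - hpq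
    rw [hu, hv]
    push_cast
    field_simp
    linear_combination h2
  -- isogeny
  obtain ⟨β, hβ0, hβ⟩ := hisog
  have h1mem2 : (1 : ℂ) ∈ AddSubgroup.closure ({1, τ₂} : Set ℂ) :=
    AddSubgroup.subset_closure (by simp)
  have hτ₂mem2 : τ₂ ∈ AddSubgroup.closure ({1, τ₂} : Set ℂ) :=
    AddSubgroup.subset_closure (by simp)
  obtain ⟨a₀, b₀, hab⟩ := mem_closure_pair.mp (by simpa using hβ 1 h1mem2)
  obtain ⟨c, d, hcd⟩ := mem_closure_pair.mp (hβ τ₂ hτ₂mem2)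
  set A : ℚ := (a₀ : ℚ) + (b₀ : ℚ) * v with hA
  set N : ℚ := (a₀ : ℚ) ^ 2 + (a₀ : ℚ) * b₀ * v - (b₀ : ℚ) ^ 2 * u with hN
  set γ : ℂ := (A : ℂ) - (b₀ : ℂ) * τ₁ with hγ
  have hβγ : β * γ = (N : ℂ) := by
    rw [hγ, ← hab, hN, hA]
    push_cast
    linear_combination (-(b₀:ℂ)^2) * hτsq
  have hNne : N ≠ 0 := by
    intro hN0
    have hγ0 : γ = 0 := by
      have := hβγ
      rw [hN0] at this
      push_cast at this
      rcases mul_eq_zero.mp this with h | h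
      · exact absurd h hβ0
      · exact h
    have := hind A (-(b₀ : ℚ)) (by rw [hγ] at hγ0; push_cast; push_cast at hγ0; linear_combination hγ0)
    have hb0 : b₀ = 0 := by exact_mod_cast neg_eq_zero.mp this.2
    have ha0 : a₀ = 0 := by
      have hA0 := this.1
      rw [hA, hb0] at hA0
      push_cast at hA0
      have : (a₀ : ℚ) = 0 := by linarith
      exact_mod_cast this
    apply hβ0
    rw [← hab, ha0, hb0]
    push_cast
    ring
  have hNC : (N : ℂ) ≠ 0 := by exact_mod_cast hNne
  set r : ℚ := (A * c - b₀ * d * u) / N with hr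
  set s : ℚ := (A * d - b₀ * c - b₀ * d * v) / N with hs
  have hτ₂eq : τ₂ = (r : ℂ) + (s : ℂ) * τ₁ := by
    have key : (N : ℂ) * τ₂ = γ * ((c : ℂ) + (d : ℂ) * τ₁) := by
      rw [← hβγ]
      calc β * γ * τ₂ = γ * (β * τ₂) := by ring
        _ = γ * ((c : ℂ) + (d : ℂ) * τ₁) := by rw [← hcd]; ring_nf
    have expand : γ * ((c : ℂ) + (d : ℂ) * τ₁)
        = ((A * c - b₀ * d * u : ℚ) : ℂ) + ((A * d - b₀ * c - b₀ * d * v : ℚ) : ℂ) * τ₁ := by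
      rw [hγ]
      push_cast
      linear_combination (-(b₀ : ℂ) * d) * hτsq
    rw [hr, hs]
    push_cast
    field_simp
    push_cast at expand
    linear_combination key.trans expand
  have hτ₁τ₂eq : τ₁ * τ₂ = ((s * u : ℚ) : ℂ) + ((r + s * v : ℚ) : ℂ) * τ₁ := by
    push_cast
    linear_combination τ₁ * hτ₂eq + (s : ℂ) * hτsq
  -- Part 1
  have part1 : τ₂ ∈ IntermediateField.adjoin ℚ ({τ₁} : Set ℂ) := by
    rw [hτ₂eq]
    have hτK : τ₁ ∈ IntermediateField.adjoin ℚ ({τ₁} : Set ℂ) :=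
      IntermediateField.subset_adjoin ℚ _ rfl
    have hrK : ∀ t : ℚ, (t : ℂ) ∈ IntermediateField.adjoin ℚ ({τ₁} : Set ℂ) := by
      intro t
      have := IntermediateField.algebraMap_mem (IntermediateField.adjoin ℚ ({τ₁} : Set ℂ)) t
      simpa using this
    exact add_mem (hrK r) (mul_mem (hrK s) hτK)
  -- Part 2 : the integer a
  set a : ℤ := (r.den : ℤ) * s.den * (s * u).den * (r + s * v).den with haDef
  have hane : a ≠ 0 := by
    rw [haDef]
    refine mul_ne_zero (mul_ne_zero (mul_ne_zero ?_ ?_) ?_) ?_ <;>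
      exact_mod_cast Rat.den_ne_zero _
  have haC : (a : ℂ) ≠ 0 := Int.cast_ne_zero.mpr hane
  have ha1 : (a : ℂ) * 1 ∈ AddSubgroup.closure ({1, τ₁} : Set ℂ) :=
    mem_closure_pair.mpr ⟨a, 0, by push_cast; ring⟩
  have haτ₁ : (a : ℂ) * τ₁ ∈ AddSubgroup.closure ({1, τ₁} : Set ℂ) :=
    mem_closure_pair.mpr ⟨0, a, by push_cast; ring⟩
  obtain ⟨m₁, hm₁⟩ := int_mul_rat r a ⟨(s.den : ℤ) * (s * u).den * (r + s * v).den, by rw [haDef]; ring⟩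
  obtain ⟨m₂, hm₂⟩ := int_mul_rat s a ⟨(r.den : ℤ) * (s * u).den * (r + s * v).den, by rw [haDef]; ring⟩
  obtain ⟨m₃, hm₃⟩ := int_mul_rat (s * u) a ⟨(r.den : ℤ) * s.den * (r + s * v).den, by rw [haDef]; ring⟩
  obtain ⟨m₄, hm₄⟩ := int_mul_rat (r + s * v) a ⟨(r.den : ℤ) * s.den * (s * u).den, by rw [haDef]; ring⟩
  have cm₁ : (m₁ : ℂ) = (a : ℂ) * (r : ℂ) := by exact_mod_cast congrArg (fun t : ℚ => (t : ℂ)) hm₁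
  have cm₂ : (m₂ : ℂ) = (a : ℂ) * (s : ℂ) := by exact_mod_cast congrArg (fun t : ℚ => (t : ℂ)) hm₂
  have cm₃ : (m₃ : ℂ) = (a : ℂ) * ((s * u : ℚ) : ℂ) := by exact_mod_cast congrArg (fun t : ℚ => (t : ℂ)) hm₃
  have cm₄ : (m₄ : ℂ) = (a : ℂ) * ((r + s * v : ℚ) : ℂ) := by exact_mod_cast congrArg (fun t : ℚ => (t : ℂ)) hm₄
  have haτ₂ : (a : ℂ) * τ₂ ∈ AddSubgroup.closure ({1, τ₁} : Set ℂ) := by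
    refine mem_closure_pair.mpr ⟨m₁, m₂, ?_⟩
    rw [hτ₂eq]
    linear_combination cm₁ + τ₁ * cm₂
  have haτ₁τ₂ : (a : ℂ) * (τ₁ * τ₂) ∈ AddSubgroup.closure ({1, τ₁} : Set ℂ) := by
    refine mem_closure_pair.mpr ⟨m₃, m₄, ?_⟩
    rw [hτ₁τ₂eq]
    linear_combination cm₃ + τ₁ * cm₄
  have hprod : ∀ z ∈ latticeProduct (AddSubgroup.closure ({1, τ₁} : Set ℂ))
      (AddSubgroup.closure ({1, τ₂} : Set ℂ)),
      (a : ℂ) * z ∈ AddSubgroup.closure ({1, τ₁} : Set ℂ) := by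
    intro z hz
    induction hz using AddSubgroup.closure_induction with
    | mem x hx =>
      obtain ⟨x₁, hx₁, x₂, hx₂, rfl⟩ := hx
      obtain ⟨m₁', n₁', h₁'⟩ := mem_closure_pair.mp hx₁
      obtain ⟨m₂', n₂', h₂'⟩ := mem_closure_pair.mp hx₂
      have key : (a : ℂ) * (x₁ * x₂)
          = (m₁' * m₂' : ℤ) • ((a : ℂ) * 1) + (n₁' * m₂' : ℤ) • ((a : ℂ) * τ₁)
            + (m₁' * n₂' : ℤ) • ((a : ℂ) * τ₂) + (n₁' * n₂' : ℤ) • ((a : ℂ) * (τ₁ * τ₂)) := by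
        simp only [zsmul_eq_mul]
        rw [← h₁', ← h₂']
        push_cast
        ring
      rw [key]
      exact AddSubgroup.add_mem _ (AddSubgroup.add_mem _ (AddSubgroup.add_mem _
        (AddSubgroup.zsmul_mem _ ha1 _) (AddSubgroup.zsmul_mem _ haτ₁ _))
        (AddSubgroup.zsmul_mem _ haτ₂ _)) (AddSubgroup.zsmul_mem _ haτ₁τ₂ _)
    | zero => simpa using AddSubgroup.zero_mem _
    | add x y _ _ hx hy => rw [mul_add]; exact AddSubgroup.add_mem _ hx hy
    | neg x _ hx => rw [mul_neg]; exact AddSubgroup.neg_mem _ hx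
  have hsub : AddSubgroup.closure ({1, τ₁} : Set ℂ) ≤
      latticeProduct (AddSubgroup.closure ({1, τ₁} : Set ℂ)) (AddSubgroup.closure ({1, τ₂} : Set ℂ)) := by
    rw [AddSubgroup.closure_le]
    intro x hx
    simp only [Set.mem_insert_iff, Set.mem_singleton_iff] at hx
    rcases hx with rfl | rfl
    · exact AddSubgroup.subset_closure ⟨1, h1mem, 1, h1mem2, by ring⟩
    · exact AddSubgroup.subset_closure ⟨_, hτmem, 1, h1mem2, (mul_one _).symm⟩
  -- Part 3 : lattice
  have h1L : (1 : ℂ) ∈ latticeProduct (AddSubgroup.closure ({1, τ₁} : Set ℂ))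
      (AddSubgroup.closure ({1, τ₂} : Set ℂ)) := hsub h1mem
  have hτL : τ₁ ∈ latticeProduct (AddSubgroup.closure ({1, τ₁} : Set ℂ))
      (AddSubgroup.closure ({1, τ₂} : Set ℂ)) := hsub hτmem
  set L' : Submodule ℤ ℂ := AddSubgroup.toIntSubmodule (latticeProduct
      (AddSubgroup.closure ({1, τ₁} : Set ℂ)) (AddSubgroup.closure ({1, τ₂} : Set ℂ))) with hL'
  have hZinj : Function.Injective fun t : ℤ => t • (1 : ℝ) := by
    intro x y hxy
    simpa using hxy
  have hbR : LinearIndependent ℝ ![(a : ℂ)⁻¹ * 1, (a : ℂ)⁻¹ * τ₁] := by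
    have hker : LinearMap.ker (LinearMap.mulLeft ℝ ((a : ℂ)⁻¹)) = ⊥ := by
      rw [LinearMap.ker_eq_bot]
      intro x y hxy
      simp only [LinearMap.mulLeft_apply] at hxy
      exact mul_left_cancel₀ (inv_ne_zero haC) hxy
    have hmap := h₁.map' (LinearMap.mulLeft ℝ ((a : ℂ)⁻¹)) hker
    have hfun : ![(a : ℂ)⁻¹ * 1, (a : ℂ)⁻¹ * τ₁] = ⇑(LinearMap.mulLeft ℝ ((a : ℂ)⁻¹)) ∘ ![1, τ₁] := by
      funext i
      fin_cases i <;> simp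
    rw [hfun]; exact hmap
  have hbZ : LinearIndependent ℤ ![(a : ℂ)⁻¹ * 1, (a : ℂ)⁻¹ * τ₁] :=
    hbR.restrict_scalars hZinj
  have hLP : L' ≤ Submodule.span ℤ (Set.range ![(a : ℂ)⁻¹ * 1, (a : ℂ)⁻¹ * τ₁]) := by
    intro z hz
    obtain ⟨m', n', hmn'⟩ := mem_closure_pair.mp (hprod z hz)
    rw [range_fin_two]
    simp only [Matrix.cons_val_zero, Matrix.cons_val_one, Matrix.head_cons]
    refine Submodule.mem_span_pair.mpr ⟨m', n', ?_⟩
    simp only [zsmul_eq_mul]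
    field_simp
    linear_combination hmn'
  obtain ⟨k, b⟩ := Submodule.basisOfPidOfLESpan hbZ hLP
  have hk2 : k ≤ 2 := by
    have := (Module.Basis.span hbZ).card_le_card_of_linearIndependent
      (b.linearIndependent.map' (Submodule.inclusion hLP)
        (LinearMap.ker_eq_bot.mpr (Submodule.inclusion_injective hLP)))
    simpa using this
  have hZind : LinearIndependent ℤ ![(1 : ℂ), τ₁] := h₁.restrict_scalars hZinj
  have hek : LinearIndependent ℤ ![(⟨1, h1L⟩ : L'), ⟨τ₁, hτL⟩] := by
    apply LinearIndependent.of_comp L'.subtype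
    convert hZind using 1
    funext i
    fin_cases i <;> rfl
  have h2k : 2 ≤ k := by simpa using b.card_le_card_of_linearIndependent hek
  have hkeq : k = 2 := le_antisymm hk2 h2k
  subst hkeq
  set w₁ : ℂ := (b 0 : ℂ) with hw₁
  set w₂ : ℂ := (b 1 : ℂ) with hw₂
  have hspan : Submodule.span ℤ ({w₁, w₂} : Set ℂ) = L' := by
    apply le_antisymm
    · rw [Submodule.span_le]
      intro x hx
      simp only [Set.mem_insert_iff, Set.mem_singleton_iff] at hx
      rcases hx with rfl | rfl
      · exact (b 0).2
      · exact (b 1).2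
    · intro z hz
      have hz' : (⟨z, hz⟩ : L') ∈ Submodule.span ℤ (Set.range b) := by
        rw [b.span_eq]; trivial
      rw [range_fin_two b] at hz'
      obtain ⟨m', n', h'⟩ := Submodule.mem_span_pair.mp hz'
      refine Submodule.mem_span_pair.mpr ⟨m', n', ?_⟩
      have := congrArg (Subtype.val) h'
      simpa [hw₁, hw₂] using this
  have hLeq : latticeProduct (AddSubgroup.closure ({1, τ₁} : Set ℂ))
      (AddSubgroup.closure ({1, τ₂} : Set ℂ)) = AddSubgroup.closure {w₁, w₂} := by
    rw [← Submodule.span_int_eq_addSubgroupClosure ({w₁, w₂} : Set ℂ), hspan, hL',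
      AddSubgroup.toIntSubmodule_toAddSubgroup]
  have hw1span : (1 : ℂ) ∈ Submodule.span ℝ ({w₁, w₂} : Set ℂ) := by
    have : (1 : ℂ) ∈ Submodule.span ℤ ({w₁, w₂} : Set ℂ) := hspan.symm ▸ h1L
    exact Submodule.span_subset_span ℤ ℝ _ this
  have hwτspan : τ₁ ∈ Submodule.span ℝ ({w₁, w₂} : Set ℂ) := by
    have : τ₁ ∈ Submodule.span ℤ ({w₁, w₂} : Set ℂ) := hspan.symm ▸ hτL
    exact Submodule.span_subset_span ℤ ℝ _ this
  have hspanR : ⊤ ≤ Submodule.span ℝ (Set.range ![w₁, w₂]) := by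
    have htop : Submodule.span ℝ (Set.range ![(1 : ℂ), τ₁]) = ⊤ :=
      h₁.span_eq_top_of_card_eq_finrank (by simp [Complex.finrank_real_complex])
    rw [← htop, range_fin_two, range_fin_two]
    apply Submodule.span_le.mpr
    intro x hx
    simp only [Matrix.cons_val_zero, Matrix.cons_val_one, Matrix.head_cons,
      Set.mem_insert_iff, Set.mem_singleton_iff] at hx ⊢
    rcases hx with rfl | rfl
    · simpa using hw1span
    · simpa using hwτspan
  have hwind : LinearIndependent ℝ ![w₁, w₂] :=
    linearIndependent_of_top_le_span_of_card_eq_finrank hspanR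
      (by simp [Complex.finrank_real_complex])
  have part3 : IsLattice (latticeProduct (AddSubgroup.closure ({1, τ₁} : Set ℂ))
      (AddSubgroup.closure ({1, τ₂} : Set ℂ))) := ⟨w₁, w₂, hwind, hLeq⟩
  exact ⟨part1, ⟨a, hane, hsub, hprod⟩, part3⟩
end
end

section
/- Let 𝒪 ⊆ 𝒪′ be orders in an imaginary quadratic field K, and let Λ be an invertible (proper) fractional ideal of 𝒪. Then 𝒪′·Λ (the additive subgroup of K generated by products αx with α ∈ 𝒪′, x ∈ Λ) is an invertible fractional ideal of 𝒪′, and the natural map Λ ⊗_𝒪 𝒪′ → 𝒪′·Λ sending x ⊗ α to αx is an isomorphism of 𝒪′-modules. -/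
noncomputable section

open scoped TensorProduct

/-- An imaginary quadratic number field embedded in ℂ. -/
def IsImagQuad (K : Subfield ℂ) : Prop :=
  Module.finrank ℚ K = 2 ∧ ∃ z : K, (z : ℂ).im ≠ 0

/-- An order in `K`: a subring of `K` free of rank 2 as a ℤ-module. -/
def IsOrderIn (K : Subfield ℂ) (O : Subring ℂ) : Prop :=
  O ≤ K.toSubring ∧ ∃ x y : ℂ, LinearIndependent ℝ ![x, y] ∧
    O.toAddSubgroup = AddSubgroup.closure {x, y}

/-- A fractional ideal of the order `O` in `K`. -/
def IsFracIdeal (K : Subfield ℂ) (O : Subring ℂ) (Λ : AddSubgroup ℂ) : Prop :=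
  (Λ : Set ℂ) ⊆ K ∧ Λ ≠ ⊥ ∧ Λ.FG ∧ ∀ a ∈ O, ∀ x ∈ Λ, a * x ∈ Λ

/-- An additive subgroup of ℂ stable under multiplication by a subring `O` is an
`O`-module, with scalar multiplication given by multiplication in ℂ. -/
@[reducible]
def modOfStable (O : Subring ℂ) (Λ : AddSubgroup ℂ)
    (h : ∀ a ∈ O, ∀ x ∈ Λ, a * x ∈ Λ) : Module O Λ :=
  letI : SMul O Λ := ⟨fun a x => ⟨(a : ℂ) * (x : ℂ), h a a.2 x x.2⟩⟩
  { smul := (· • ·)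
    one_smul := fun x => Subtype.ext (one_mul _)
    mul_smul := fun a b x => Subtype.ext (mul_assoc _ _ _)
    smul_zero := fun a => Subtype.ext (mul_zero _)
    smul_add := fun a x y => Subtype.ext (mul_add _ _ _)
    add_smul := fun a b x => Subtype.ext (add_mul _ _ _)
    zero_smul := fun x => Subtype.ext (zero_mul _) }

/-- The lattice product `O'·Λ` is stable under multiplication by `O'`. -/
lemma latticeProduct_stable (O' : Subring ℂ) (Λ : AddSubgroup ℂ) :
    ∀ a ∈ O', ∀ z ∈ latticeProduct O'.toAddSubgroup Λ,
      a * z ∈ latticeProduct O'.toAddSubgroup Λ := by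
  intro a ha z hz
  induction hz using AddSubgroup.closure_induction with
  | mem x hx =>
      obtain ⟨b, hb, y, hy, rfl⟩ := hx
      exact AddSubgroup.subset_closure ⟨a * b, O'.mul_mem ha hb, y, hy, by ring⟩
  | zero => simpa using (latticeProduct O'.toAddSubgroup Λ).zero_mem
  | add x y _ _ hx hy => simpa [mul_add] using
      (latticeProduct O'.toAddSubgroup Λ).add_mem hx hy
  | neg x _ hx => simpa [mul_neg] using (latticeProduct O'.toAddSubgroup Λ).neg_mem hx

/-! If `Λ M = 𝒪`, write `1 = ∑ xᵢ yᵢ` with `xᵢ ∈ Λ`, `yᵢ ∈ M`. Multiplying lattices is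
associative and commutative, so `(𝒪′Λ)(𝒪′M) = 𝒪′𝒪′𝒪 = 𝒪′`. The multiplication map
`A ⊗_𝒪 Λ → AΛ` (for any `𝒪`-stable lattice `A`) has the inverse `w ↦ ∑ (w yᵢ) ⊗ xᵢ`: here
`w yᵢ ∈ A Λ M = A 𝒪 = A`, and on `a ⊗ v` it gives `∑ (v yᵢ) a ⊗ xᵢ = a ⊗ ∑ (v yᵢ) xᵢ = a ⊗ v`
because `v yᵢ ∈ 𝒪`. -/

lemma mul_mem_latticeProduct {A B : AddSubgroup ℂ} {a b : ℂ} (ha : a ∈ A) (hb : b ∈ B) :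
    a * b ∈ latticeProduct A B :=
  AddSubgroup.subset_closure ⟨a, ha, b, hb, rfl⟩

lemma latticeProduct_le_iff {A B C : AddSubgroup ℂ} :
    latticeProduct A B ≤ C ↔ ∀ a ∈ A, ∀ b ∈ B, a * b ∈ C := by
  refine ⟨fun h a ha b hb => h (mul_mem_latticeProduct ha hb), fun h => ?_⟩
  rw [latticeProduct, AddSubgroup.closure_le]
  rintro _ ⟨a, ha, b, hb, rfl⟩
  exact h a ha b hb

lemma toIntSubmodule_latticeProduct (A B : AddSubgroup ℂ) :
    (latticeProduct A B).toIntSubmodule = A.toIntSubmodule * B.toIntSubmodule := by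
  rw [Submodule.mul_eq_span_mul_set, latticeProduct, ← Submodule.span_int_eq_addSubgroupClosure,
    Submodule.toAddSubgroup_toIntSubmodule]
  congr 1
  ext z
  simp [Set.mem_mul, eq_comm]

lemma latticeProduct_assoc (A B C : AddSubgroup ℂ) :
    latticeProduct (latticeProduct A B) C = latticeProduct A (latticeProduct B C) :=
  AddSubgroup.toIntSubmodule.injective <| by
    simp only [toIntSubmodule_latticeProduct, mul_assoc]

lemma latticeProduct_fg {A B : AddSubgroup ℂ} (hA : A.FG) (hB : B.FG) :
    (latticeProduct A B).FG := by
  rw [← AddSubgroup.toIntSubmodule_toAddSubgroup (latticeProduct A B),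
    ← Submodule.fg_iff_addSubgroup_fg, toIntSubmodule_latticeProduct]
  rw [← AddSubgroup.toIntSubmodule_toAddSubgroup A, ← Submodule.fg_iff_addSubgroup_fg] at hA
  rw [← AddSubgroup.toIntSubmodule_toAddSubgroup B, ← Submodule.fg_iff_addSubgroup_fg] at hB
  exact hA.mul hB

lemma le_latticeProduct_of_one_mem {A : AddSubgroup ℂ} (h : (1 : ℂ) ∈ A) (B : AddSubgroup ℂ) :
    B ≤ latticeProduct A B := fun b hb => by
  simpa using mul_mem_latticeProduct h hb

lemma latticeProduct_subring_of_le {O O' : Subring ℂ} (h : O ≤ O') :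
    latticeProduct O'.toAddSubgroup O.toAddSubgroup = O'.toAddSubgroup := by
  refine le_antisymm (latticeProduct_le_iff.2 fun a ha b hb => O'.mul_mem ha (h hb)) ?_
  intro a ha
  simpa using mul_mem_latticeProduct ha (Subring.mem_toAddSubgroup.2 O.one_mem)

lemma latticeProduct_extend_eq_of_eq {O O' : Subring ℂ} (hOO' : O ≤ O') {Λ M : AddSubgroup ℂ}
    (hΛM : latticeProduct Λ M = O.toAddSubgroup) :
    latticeProduct (latticeProduct O'.toAddSubgroup Λ) (latticeProduct O'.toAddSubgroup M) =
      O'.toAddSubgroup := by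
  apply AddSubgroup.toIntSubmodule.injective
  have hO'O' := congrArg AddSubgroup.toIntSubmodule (latticeProduct_subring_of_le (le_refl O'))
  have hO'O := congrArg AddSubgroup.toIntSubmodule (latticeProduct_subring_of_le hOO')
  have hΛM' := congrArg AddSubgroup.toIntSubmodule hΛM
  simp only [toIntSubmodule_latticeProduct] at hO'O' hO'O hΛM' ⊢
  rw [mul_mul_mul_comm, hΛM', hO'O', hO'O]

lemma exists_sum_mul_eq_of_mem_latticeProduct {A B : AddSubgroup ℂ} {z : ℂ}
    (hz : z ∈ latticeProduct A B) :
    ∃ (n : ℕ) (x : Fin n → A) (y : Fin n → B), ∑ i, (x i : ℂ) * y i = z := by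
  rw [latticeProduct, ← Submodule.span_int_eq_addSubgroupClosure, Submodule.mem_toAddSubgroup,
    Submodule.mem_span_set'] at hz
  obtain ⟨n, c, g, rfl⟩ := hz
  choose a ha b hb hab using fun i => (g i).2
  refine ⟨n, fun i => ⟨c i • a i, AddSubgroup.zsmul_mem _ (ha i) _⟩, fun i => ⟨b i, hb i⟩, ?_⟩
  simp [hab, mul_assoc]

lemma IsOrderIn.fg {K : Subfield ℂ} {O : Subring ℂ} (hO : IsOrderIn K O) :
    O.toAddSubgroup.FG := by
  obtain ⟨-, x, y, -, hxy⟩ := hO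
  exact ⟨{x, y}, by rw [hxy]; simp⟩

lemma IsFracIdeal.extend {K : Subfield ℂ} {O O' : Subring ℂ} (hO' : IsOrderIn K O')
    {Λ : AddSubgroup ℂ} (hΛ : IsFracIdeal K O Λ) :
    IsFracIdeal K O' (latticeProduct O'.toAddSubgroup Λ) := by
  obtain ⟨hΛK, hΛne, hΛfg, -⟩ := hΛ
  refine ⟨?_, ?_, latticeProduct_fg hO'.fg hΛfg, latticeProduct_stable O' Λ⟩
  · exact (latticeProduct_le_iff (C := K.toSubring.toAddSubgroup)).2
      fun a ha b hb => K.mul_mem (hO'.1 ha) (hΛK hb)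
  · exact ne_bot_of_le_ne_bot hΛne (le_latticeProduct_of_one_mem O'.one_mem Λ)

lemma mul_mem_of_mem_latticeProduct {O : Subring ℂ} {A Λ M : AddSubgroup ℂ}
    (hA : ∀ r ∈ O, ∀ a ∈ A, r * a ∈ A) (hΛM : latticeProduct Λ M = O.toAddSubgroup)
    {w y : ℂ} (hw : w ∈ latticeProduct A Λ) (hy : y ∈ M) : w * y ∈ A := by
  have hAO : latticeProduct A O.toAddSubgroup ≤ A :=
    latticeProduct_le_iff.2 fun a ha r hr => mul_comm r a ▸ hA r hr a ha
  apply hAO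
  rw [← hΛM, ← latticeProduct_assoc]
  exact mul_mem_latticeProduct hw hy

lemma mul_mem_of_coe_smul {O : Subring ℂ} {A : AddSubgroup ℂ} [Module O A]
    (hA : ∀ (r : O) (a : A), ((r • a : A) : ℂ) = r * a) {r a : ℂ} (hr : r ∈ O) (ha : a ∈ A) :
    r * a ∈ A :=
  hA ⟨r, hr⟩ ⟨a, ha⟩ ▸ ((⟨r, hr⟩ : O) • (⟨a, ha⟩ : A)).2

def latticeProductMul (A B : AddSubgroup ℂ) : A →+ B →+ latticeProduct A B :=
  AddMonoidHom.mk'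
    (fun a => AddMonoidHom.mk' (fun b => ⟨a * b, mul_mem_latticeProduct a.2 b.2⟩)
      fun _ _ => Subtype.ext (mul_add _ _ _))
    fun _ _ => AddMonoidHom.ext fun _ => Subtype.ext (add_mul _ _ _)

lemma sum_mul_mul_eq_self {ι : Type*} {s : Finset ι} {x y : ι → ℂ}
    (hxy : ∑ i ∈ s, x i * y i = 1) (w : ℂ) : ∑ i ∈ s, w * y i * x i = w :=
  calc ∑ i ∈ s, w * y i * x i = w * ∑ i ∈ s, x i * y i := by
        rw [Finset.mul_sum]
        exact Finset.sum_congr rfl fun _ _ => by ring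
    _ = w := by rw [hxy, mul_one]

section TensorMul

variable {O : Subring ℂ} {A Λ : AddSubgroup ℂ} [Module O A] [Module O Λ]
  (hA : ∀ (r : O) (a : A), ((r • a : A) : ℂ) = r * a)
  (hΛ : ∀ (r : O) (v : Λ), ((r • v : Λ) : ℂ) = r * v)

def tensorMul : A ⊗[O] Λ →+ latticeProduct A Λ :=
  TensorProduct.liftAddHom (latticeProductMul A Λ) fun r a v => Subtype.ext <| by
    simp only [latticeProductMul, AddMonoidHom.mk'_apply, hA, hΛ]
    ring

@[simp]
lemma coe_tensorMul_tmul (a : A) (v : Λ) : (tensorMul hA hΛ (a ⊗ₜ v) : ℂ) = a * v := rfl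

lemma tensorMul_smul {O' : Subring ℂ} [Module O' A] [SMulCommClass O O' A]
    [Module O' (latticeProduct A Λ)] (hA' : ∀ (c : O') (a : A), ((c • a : A) : ℂ) = c * a)
    (hAΛ' : ∀ (c : O') (w : latticeProduct A Λ), ((c • w : latticeProduct A Λ) : ℂ) = c * w)
    (c : O') (t : A ⊗[O] Λ) : tensorMul hA hΛ (c • t) = c • tensorMul hA hΛ t := by
  induction t using TensorProduct.induction_on with
  | zero => simp only [smul_zero, map_zero]
  | tmul a v =>
    ext
    rw [TensorProduct.smul_tmul', coe_tensorMul_tmul, hAΛ', coe_tensorMul_tmul, hA', mul_assoc]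
  | add t t' ht ht' => simp only [smul_add, map_add, ht, ht']

section Inverse

variable {M : AddSubgroup ℂ} (hΛM : latticeProduct Λ M = O.toAddSubgroup)
  {n : ℕ} (x : Fin n → Λ) (y : Fin n → M)

def tensorMulInv : latticeProduct A Λ →+ A ⊗[O] Λ where
  toFun w := ∑ i, (⟨w * y i, mul_mem_of_mem_latticeProduct (fun _ hr _ ha =>
    mul_mem_of_coe_smul hA hr ha) hΛM w.2 (y i).2⟩ : A) ⊗ₜ[O] x i
  map_zero' := Finset.sum_eq_zero fun i _ => by
    rw [← TensorProduct.zero_tmul A (x i)]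
    exact congrArg (fun b : A => b ⊗ₜ[O] x i) (Subtype.ext (zero_mul _))
  map_add' w w' := by
    simp only [← Finset.sum_add_distrib, ← TensorProduct.add_tmul]
    congr! 2
    ext
    simp [add_mul]

lemma tensorMulInv_apply (w : latticeProduct A Λ) :
    tensorMulInv hA hΛM x y w = ∑ i, (⟨w * y i, mul_mem_of_mem_latticeProduct (fun _ hr _ ha =>
      mul_mem_of_coe_smul hA hr ha) hΛM w.2 (y i).2⟩ : A) ⊗ₜ[O] x i := rfl

lemma leftInverse_tensorMulInv (hxy : ∑ i, (x i : ℂ) * y i = 1) :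
    Function.LeftInverse (tensorMulInv hA hΛM x y) (tensorMul hA hΛ) := by
  intro t
  induction t using TensorProduct.induction_on with
  | zero => simp only [map_zero]
  | tmul a v =>
    have hvy (i : Fin n) : (v : ℂ) * y i ∈ O.toAddSubgroup :=
      hΛM ▸ mul_mem_latticeProduct v.2 (y i).2
    calc tensorMulInv hA hΛM x y (tensorMul hA hΛ (a ⊗ₜ v))
        = ∑ i, ((⟨(v : ℂ) * y i, hvy i⟩ : O) • a) ⊗ₜ[O] x i := by
          rw [tensorMulInv_apply]
          refine Finset.sum_congr rfl fun i _ => congrArg (fun b : A => b ⊗ₜ[O] x i) (Subtype.ext ?_)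
          simp only [coe_tensorMul_tmul, hA]
          ring
      _ = a ⊗ₜ[O] ∑ i, (⟨(v : ℂ) * y i, hvy i⟩ : O) • x i := by
          simp only [TensorProduct.smul_tmul, TensorProduct.tmul_sum]
      _ = a ⊗ₜ[O] v := by
          congr 1
          ext
          simp only [AddSubgroup.val_finsetSum, hΛ, sum_mul_mul_eq_self hxy]
  | add t t' ht ht' => simp only [map_add, ht, ht']

lemma rightInverse_tensorMulInv (hxy : ∑ i, (x i : ℂ) * y i = 1) :
    Function.RightInverse (tensorMulInv hA hΛM x y) (tensorMul hA hΛ) := by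
  intro w
  ext
  simp only [tensorMulInv_apply, map_sum, AddSubgroup.val_finsetSum, coe_tensorMul_tmul]
  exact sum_mul_mul_eq_self hxy w

end Inverse

theorem tensorMul_bijective {M : AddSubgroup ℂ} (hΛM : latticeProduct Λ M = O.toAddSubgroup) :
    Function.Bijective (tensorMul hA hΛ) := by
  obtain ⟨n, x, y, hxy⟩ := exists_sum_mul_eq_of_mem_latticeProduct
    (hΛM ▸ Subring.mem_toAddSubgroup.2 O.one_mem : (1 : ℂ) ∈ latticeProduct Λ M)
  exact ⟨(leftInverse_tensorMulInv hA hΛ hΛM x y hxy).injective,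
    (rightInverse_tensorMulInv hA hΛ hΛM x y hxy).surjective⟩

end TensorMul

theorem exists_linearEquiv_tensorMul {O O' : Subring ℂ} {A Λ : AddSubgroup ℂ} [Module O A]
    [Module O Λ] [Module O' A] [SMulCommClass O O' A] [Module O' (latticeProduct A Λ)]
    (hA : ∀ (r : O) (a : A), ((r • a : A) : ℂ) = r * a)
    (hΛ : ∀ (r : O) (v : Λ), ((r • v : Λ) : ℂ) = r * v)
    (hA' : ∀ (c : O') (a : A), ((c • a : A) : ℂ) = c * a)
    (hAΛ' : ∀ (c : O') (w : latticeProduct A Λ), ((c • w : latticeProduct A Λ) : ℂ) = c * w)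
    {M : AddSubgroup ℂ} (hΛM : latticeProduct Λ M = O.toAddSubgroup) :
    ∃ e : A ⊗[O] Λ ≃ₗ[O'] latticeProduct A Λ, ∀ (a : A) (v : Λ), (e (a ⊗ₜ v) : ℂ) = a * v :=
  ⟨(AddEquiv.ofBijective _ (tensorMul_bijective hA hΛ hΛM)).toLinearEquiv
    (tensorMul_smul hA hΛ hA' hAΛ'), fun _ _ => rfl⟩

theorem statement11_general (K : Subfield ℂ)
    (O O' : Subring ℂ) (hO' : IsOrderIn K O') (hOO' : O ≤ O')
    (Λ : AddSubgroup ℂ) (hΛ : IsFracIdeal K O Λ)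
    (hinv : ∃ M : AddSubgroup ℂ, IsFracIdeal K O M ∧
      latticeProduct Λ M = O.toAddSubgroup) :
    (IsFracIdeal K O' (latticeProduct O'.toAddSubgroup Λ) ∧
      ∃ M : AddSubgroup ℂ, IsFracIdeal K O' M ∧
        latticeProduct (latticeProduct O'.toAddSubgroup Λ) M = O'.toAddSubgroup) ∧
    (letI : Module O Λ := modOfStable O Λ hΛ.2.2.2
     letI : Module O O'.toAddSubgroup :=
       modOfStable O O'.toAddSubgroup (fun a ha x hx => O'.mul_mem (hOO' ha) hx)
     letI : Module O' O'.toAddSubgroup :=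
       modOfStable O' O'.toAddSubgroup (fun a ha x hx => O'.mul_mem ha hx)
     letI : SMulCommClass O O' O'.toAddSubgroup :=
       ⟨fun a b x => Subtype.ext (mul_left_comm (a : ℂ) (b : ℂ) (x : ℂ))⟩
     letI : Module O' (latticeProduct O'.toAddSubgroup Λ) :=
       modOfStable O' (latticeProduct O'.toAddSubgroup Λ) (latticeProduct_stable O' Λ)
     ∃ e : (O'.toAddSubgroup ⊗[O] Λ) ≃ₗ[O'] latticeProduct O'.toAddSubgroup Λ,
       ∀ (α : O'.toAddSubgroup) (x : Λ),
         (e (α ⊗ₜ[O] x) : ℂ) = (α : ℂ) * (x : ℂ)) := by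
  obtain ⟨M, hM, hΛM⟩ := hinv
  refine ⟨⟨hΛ.extend hO', _, hM.extend hO', latticeProduct_extend_eq_of_eq hOO' hΛM⟩, ?_⟩
  -- The `letI`s of the statement are inlined in the goal, so the instances are put back here.
  let := modOfStable O Λ hΛ.2.2.2
  let := modOfStable O O'.toAddSubgroup fun _ ha _ hx => O'.mul_mem (hOO' ha) hx
  let := modOfStable O' O'.toAddSubgroup fun _ ha _ hx => O'.mul_mem ha hx
  have : SMulCommClass O O' O'.toAddSubgroup :=
    ⟨fun a b x => Subtype.ext (mul_left_comm (a : ℂ) b x)⟩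
  let := modOfStable O' _ (latticeProduct_stable O' Λ)
  exact exists_linearEquiv_tensorMul (fun _ _ => rfl) (fun _ _ => rfl) (fun _ _ => rfl)
    (fun _ _ => rfl) hΛM

/-- Let `𝒪 ⊆ 𝒪′` be orders in an imaginary quadratic field `K ⊆ ℂ` and let
`Λ` be an invertible fractional ideal of `𝒪`.  Then `𝒪′·Λ` is an invertible fractional
ideal of `𝒪′`, and the natural map `Λ ⊗_𝒪 𝒪′ → 𝒪′·Λ`, `x ⊗ α ↦ αx` (written here with the
tensor factors in the order `𝒪′ ⊗_𝒪 Λ`, `α ⊗ x ↦ αx`), is an isomorphism of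
`𝒪′`-modules. -/
theorem statement11 (K : Subfield ℂ) (hK : IsImagQuad K)
    (O O' : Subring ℂ) (hO : IsOrderIn K O) (hO' : IsOrderIn K O') (hOO' : O ≤ O')
    (Λ : AddSubgroup ℂ) (hΛ : IsFracIdeal K O Λ)
    (hinv : ∃ M : AddSubgroup ℂ, IsFracIdeal K O M ∧
      latticeProduct Λ M = O.toAddSubgroup) :
    (IsFracIdeal K O' (latticeProduct O'.toAddSubgroup Λ) ∧
      ∃ M : AddSubgroup ℂ, IsFracIdeal K O' M ∧
        latticeProduct (latticeProduct O'.toAddSubgroup Λ) M = O'.toAddSubgroup) ∧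
    (letI : Module O Λ := modOfStable O Λ hΛ.2.2.2
     letI : Module O O'.toAddSubgroup :=
       modOfStable O O'.toAddSubgroup (fun a ha x hx => O'.mul_mem (hOO' ha) hx)
     letI : Module O' O'.toAddSubgroup :=
       modOfStable O' O'.toAddSubgroup (fun a ha x hx => O'.mul_mem ha hx)
     letI : SMulCommClass O O' O'.toAddSubgroup :=
       ⟨fun a b x => Subtype.ext (mul_left_comm (a : ℂ) (b : ℂ) (x : ℂ))⟩
     letI : Module O' (latticeProduct O'.toAddSubgroup Λ) :=
       modOfStable O' (latticeProduct O'.toAddSubgroup Λ) (latticeProduct_stable O' Λ)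
     ∃ e : (O'.toAddSubgroup ⊗[O] Λ) ≃ₗ[O'] latticeProduct O'.toAddSubgroup Λ,
       ∀ (α : O'.toAddSubgroup) (x : Λ),
         (e (α ⊗ₜ[O] x) : ℂ) = (α : ℂ) * (x : ℂ)) :=
  statement11_general K O O' hO' hOO' Λ hΛ hinv
end
end
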